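/- arXiv:2305.12322 — 2 statements merged into one kernel-verified Lean document; each statement's English description precedes it below -/
import Mathlib

section
/- With δ_ET distributed as (0 w.p. S/J; h̃-h w.p. (J-S)/J) and δ_SED distributed as ((1-p)(J-S)/S·h w.p. S/J; -h w.p. (1-p)(J-S)/J; h̃-h w.p. p(J-S)/J), we have E[δ_SED] = p · E[δ_ET]. In particular ‖E[δ_SED]‖ ≤ ‖E[δ_ET]‖ for all p ∈ [0,1]. -/
/-- E[δ_SED] = p · E[δ_ET], and hence ‖E[δ_SED]‖ ≤ ‖E[δ_ET]‖ for p ∈ [0,1]. -/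
theorem SED_bias_reduction (d S J : ℕ) (hS : 0 < S) (hSJ : S ≤ J)
    (p : ℝ) (hp : p ∈ Set.Icc (0 : ℝ) 1)
    (h htilde : EuclideanSpace ℝ (Fin d)) :
    (((S : ℝ) / J) • ((((1 - p) * ((J : ℝ) - S)) / S) • h)
        + (((1 - p) * ((J : ℝ) - S)) / J) • (-h)
        + ((p * ((J : ℝ) - S)) / J) • (htilde - h)
      = p • (((S : ℝ) / J) • (0 : EuclideanSpace ℝ (Fin d))
          + (((J : ℝ) - S) / J) • (htilde - h)))
    ∧ ‖((S : ℝ) / J) • ((((1 - p) * ((J : ℝ) - S)) / S) • h)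
        + (((1 - p) * ((J : ℝ) - S)) / J) • (-h)
        + ((p * ((J : ℝ) - S)) / J) • (htilde - h)‖
      ≤ ‖((S : ℝ) / J) • (0 : EuclideanSpace ℝ (Fin d))
          + (((J : ℝ) - S) / J) • (htilde - h)‖ := by
  have hJ0 : (J : ℝ) ≠ 0 := Nat.cast_ne_zero.mpr (hS.trans_le hSJ).ne'
  have hS0 : (S : ℝ) ≠ 0 := Nat.cast_ne_zero.mpr hS.ne'
  have heq : (((S : ℝ) / J) • ((((1 - p) * ((J : ℝ) - S)) / S) • h)
        + (((1 - p) * ((J : ℝ) - S)) / J) • (-h)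
        + ((p * ((J : ℝ) - S)) / J) • (htilde - h)
      = p • (((S : ℝ) / J) • (0 : EuclideanSpace ℝ (Fin d))
          + (((J : ℝ) - S) / J) • (htilde - h))) := by
    have hc : (S:ℝ)/J * (((1 - p) * ((J:ℝ) - S))/S) = ((1 - p) * ((J:ℝ) - S))/J := by
      field_simp
    rw [smul_smul, hc]
    module
  refine ⟨heq, ?_⟩
  rw [heq, norm_smul]
  calc ‖p‖ * ‖((S : ℝ) / J) • (0 : EuclideanSpace ℝ (Fin d))
          + (((J : ℝ) - S) / J) • (htilde - h)‖
      ≤ 1 * ‖((S : ℝ) / J) • (0 : EuclideanSpace ℝ (Fin d))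
          + (((J : ℝ) - S) / J) • (htilde - h)‖ := by
        apply mul_le_mul_of_nonneg_right _ (norm_nonneg _)
        rw [Real.norm_eq_abs, abs_le]; exact ⟨by linarith [hp.1], hp.2⟩
    _ = _ := one_mul _
end

section
/- Let A ∈ ℝ^{d×d} be symmetric positive semidefinite and let δ_ET be 0 with probability S/J and (h̃-h) with probability (J-S)/J, and δ_SED be ((1-p)(J-S)/S)h w.p. S/J, -h w.p. (1-p)(J-S)/J, and (h̃-h) w.p. p(J-S)/J. Then E[δ_SEDᵀ A δ_SED] - p·E[δ_ETᵀ A δ_ET] = ((J-S)(1-p)(J-pJ+pS)/(JS))·hᵀAh ≥ 0. -/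
open Matrix

/-- For PSD A, E[δ_SEDᵀAδ_SED] - p·E[δ_ETᵀAδ_ET]
    = ((J-S)(1-p)(J-pJ+pS)/(JS))·hᵀAh ≥ 0. -/
theorem SED_quadratic_form_extra_regularization (d S J : ℕ) (hS : 0 < S) (hSJ : S ≤ J)
    (p : ℝ) (hp : p ∈ Set.Icc (0 : ℝ) 1)
    (A : Matrix (Fin d) (Fin d) ℝ) (hA : A.PosSemidef)
    (h htilde : Fin d → ℝ) :
    (((S : ℝ) / J) * (((((1 - p) * ((J : ℝ) - S)) / S) • h) ⬝ᵥ
          A.mulVec ((((1 - p) * ((J : ℝ) - S)) / S) • h))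
        + (((1 - p) * ((J : ℝ) - S)) / J) * ((-h) ⬝ᵥ A.mulVec (-h))
        + ((p * ((J : ℝ) - S)) / J) * ((htilde - h) ⬝ᵥ A.mulVec (htilde - h)))
      - p * (((S : ℝ) / J) * ((0 : Fin d → ℝ) ⬝ᵥ A.mulVec (0 : Fin d → ℝ))
          + (((J : ℝ) - S) / J) * ((htilde - h) ⬝ᵥ A.mulVec (htilde - h)))
      = ((((J : ℝ) - S) * (1 - p) * ((J : ℝ) - p * J + p * S)) / ((J : ℝ) * S))
          * (h ⬝ᵥ A.mulVec h)
    ∧ 0 ≤ ((((J : ℝ) - S) * (1 - p) * ((J : ℝ) - p * J + p * S)) / ((J : ℝ) * S))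
          * (h ⬝ᵥ A.mulVec h) := by
  have hS0 : (S : ℝ) ≠ 0 := by positivity
  have hJ0 : (J : ℝ) ≠ 0 := by
    have : 0 < J := lt_of_lt_of_le hS hSJ
    positivity
  have hSJ' : (S : ℝ) ≤ J := Nat.cast_le.mpr hSJ
  obtain ⟨hp0, hp1⟩ := hp
  constructor
  · set c := ((1 - p) * ((J : ℝ) - S)) / S with hc
    have e1 : ((c • h) ⬝ᵥ A.mulVec (c • h)) = c * c * (h ⬝ᵥ A.mulVec h) := by
      rw [mulVec_smul, dotProduct_smul, smul_dotProduct]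
      ring_nf
    have e2 : ((-h) ⬝ᵥ A.mulVec (-h)) = h ⬝ᵥ A.mulVec h := by
      rw [mulVec_neg, neg_dotProduct, dotProduct_neg, neg_neg]
    have e3 : ((0 : Fin d → ℝ) ⬝ᵥ A.mulVec (0 : Fin d → ℝ)) = 0 := by simp
    rw [e1, e2, e3, hc]
    field_simp
    ring
  · have hq : 0 ≤ h ⬝ᵥ A.mulVec h := by simpa using hA.dotProduct_mulVec_nonneg h
    have hco : 0 ≤ (((J : ℝ) - S) * (1 - p) * ((J : ℝ) - p * J + p * S)) / ((J : ℝ) * S) := by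
      apply div_nonneg
      · apply mul_nonneg (mul_nonneg (by linarith) (by linarith))
        nlinarith
      · positivity
    exact mul_nonneg hco hq
end
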